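/- arXiv:1204.4010 — 2 statements merged into one kernel-verified Lean document; each statement's English description precedes it below -/
import Mathlib

section
/- The bondage number of the cycle C_n (n ≥ 3) equals 3 if n ≡ 1 (mod 3), and 2 otherwise. -/
open SimpleGraph

variable {V : Type*}

/-- `S` is a dominating set of `G`: every vertex is in `S` or has a neighbor in `S`. -/
def SimpleGraph.IsDomSet (G : SimpleGraph V) (S : Finset V) : Prop :=
  ∀ v : V, v ∈ S ∨ ∃ u ∈ S, G.Adj u v

/-- The domination number of a finite graph. -/
noncomputable def SimpleGraph.domNum [Fintype V] (G : SimpleGraph V) : ℕ :=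
  sInf {n | ∃ S : Finset V, S.card = n ∧ G.IsDomSet S}

/-- The bondage number: the minimum size of a set of edges of `G` whose removal
increases the domination number. -/
noncomputable def SimpleGraph.bondageNum [Fintype V] (G : SimpleGraph V) : ℕ :=
  sInf {n | ∃ B : Finset (Sym2 V), B.card = n ∧ ↑B ⊆ G.edgeSet ∧
    G.domNum < (G.deleteEdges ↑B).domNum}

/-!
A vertex of `C_n` dominates at most three vertices, so `γ(C_n) ≥ ⌈n/3⌉ = (n + 2) / 3`, and
every third vertex of a path dominates it, so `γ(C_n) ≤ ⌈n/3⌉`. Deleting one edge of `C_n`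
leaves a path on `n` vertices; deleting two leaves paths on `a` and `n - a` vertices, and
`⌈a/3⌉ + ⌈(n-a)/3⌉ = ⌈n/3⌉` when `n ≡ 1 (mod 3)`. So fewer edges than claimed never raise `γ`.
Conversely, deleting the edges at `k` vertices isolates them; an isolated vertex lies in every
dominating set but dominates only itself, so `3γ ≥ n + 2k`, which is more than `3⌈n/3⌉` for
`k = 1` (two edges) when `n ≢ 1 (mod 3)`, and for two adjacent vertices (three edges) always.
-/

section

open scoped Fin.NatCast

theorem Fin.add_natCast_inj {n : ℕ} [NeZero n] (x : Fin n) {i j : ℕ} (hi : i < n) (hj : j < n) :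
    x + (i : Fin n) = x + j ↔ i = j := by
  rw [add_right_inj, Fin.ext_iff, Fin.val_natCast, Fin.val_natCast, Nat.mod_eq_of_lt hi,
    Nat.mod_eq_of_lt hj]

end

namespace SimpleGraph

section General

variable (G : SimpleGraph V)

theorem domNum_le_card [Fintype V] {S : Finset V} (hS : G.IsDomSet S) : G.domNum ≤ S.card :=
  Nat.sInf_le ⟨S, rfl, hS⟩

theorem exists_isDomSet_card_eq_domNum [Fintype V] :
    ∃ S : Finset V, G.IsDomSet S ∧ S.card = G.domNum := by
  obtain ⟨S, hcard, hS⟩ := Nat.sInf_mem (s := {n | ∃ S : Finset V, S.card = n ∧ G.IsDomSet S})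
    ⟨_, Finset.univ, rfl, fun v => Or.inl (Finset.mem_univ v)⟩
  exact ⟨S, hS, hcard⟩

variable {G}

theorem IsDomSet.mem_of_forall_not_adj {S : Finset V} (hS : G.IsDomSet S) {v : V}
    (hv : ∀ w, ¬G.Adj v w) : v ∈ S :=
  (hS v).resolve_right fun ⟨u, _, huv⟩ => hv u huv.symm

theorem IsDomSet.card_le_sum_degree [Fintype V] [DecidableEq V] [DecidableRel G.Adj]
    {S : Finset V} (hS : G.IsDomSet S) : Fintype.card V ≤ ∑ v ∈ S, (G.degree v + 1) := by
  have hcover : Finset.univ ⊆ S.biUnion fun v => insert v (G.neighborFinset v) := by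
    intro v _
    rcases hS v with hv | ⟨u, hu, huv⟩
    · exact Finset.mem_biUnion.2 ⟨v, hv, Finset.mem_insert_self _ _⟩
    · exact Finset.mem_biUnion.2
        ⟨u, hu, Finset.mem_insert_of_mem ((G.mem_neighborFinset u v).2 huv)⟩
  calc Fintype.card V ≤ (S.biUnion fun v => insert v (G.neighborFinset v)).card :=
        Finset.card_le_card hcover
    _ ≤ ∑ v ∈ S, (insert v (G.neighborFinset v)).card := Finset.card_biUnion_le
    _ ≤ ∑ v ∈ S, (G.degree v + 1) := Finset.sum_le_sum fun v _ => Finset.card_insert_le _ _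

theorem card_add_two_mul_card_le_three_mul_domNum [Fintype V] [DecidableRel G.Adj]
    (hdeg : ∀ v, G.degree v ≤ 2) {T : Finset V} (hT : ∀ t ∈ T, ∀ w, ¬G.Adj t w) :
    Fintype.card V + 2 * T.card ≤ 3 * G.domNum := by
  classical
  obtain ⟨S, hS, hcard⟩ := G.exists_isDomSet_card_eq_domNum
  have hTS : T ⊆ S := fun t ht => hS.mem_of_forall_not_adj (hT t ht)
  have hT0 : ∀ t ∈ T, G.degree t = 0 := fun t ht =>
    Finset.card_eq_zero.2 (Finset.eq_empty_of_forall_notMem fun w hw =>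
      hT t ht w ((G.mem_neighborFinset t w).1 hw))
  have hsum : ∑ v ∈ S, (G.degree v + 1) ≤ 3 * (S \ T).card + T.card := by
    have hrest : ∑ v ∈ S \ T, (G.degree v + 1) ≤ ∑ _v ∈ S \ T, 3 :=
      Finset.sum_le_sum fun v _ => Nat.add_le_add_right (hdeg v) 1
    have hisolated : ∑ t ∈ T, (G.degree t + 1) = ∑ _t ∈ T, 1 :=
      Finset.sum_congr rfl fun t ht => by rw [hT0 t ht]
    rw [← Finset.sum_sdiff hTS, hisolated]
    simp only [Finset.sum_const, smul_eq_mul, mul_one] at hrest ⊢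
    omega
  have := hS.card_le_sum_degree
  rw [Finset.card_sdiff_of_subset hTS] at hsum
  have := Finset.card_le_card hTS
  omega

theorem exists_finset_dominating_path [DecidableEq V] (u : ℕ → V) {m : ℕ}
    (hu : ∀ k, k + 1 < m → G.Adj (u k) (u (k + 1))) :
    ∃ S : Finset V, S.card ≤ (m + 2) / 3 ∧ ∀ j < m, u j ∈ S ∨ ∃ w ∈ S, G.Adj w (u j) := by
  set centre : ℕ → ℕ := fun i => min (3 * i + 1) (m - 1) with hcentre_def
  refine ⟨(Finset.range ((m + 2) / 3)).image (u ∘ centre),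
    Finset.card_image_le.trans (Finset.card_range _).le, fun j hj => ?_⟩
  have hcentre : u (centre (j / 3)) ∈ (Finset.range ((m + 2) / 3)).image (u ∘ centre) :=
    Finset.mem_image_of_mem (u ∘ centre) (Finset.mem_range.2 (by omega))
  by_cases hle : 3 * (j / 3) + 1 ≤ m - 1
  · rw [show centre (j / 3) = 3 * (j / 3) + 1 from min_eq_left hle] at hcentre
    rcases (by omega : j = 3 * (j / 3) ∨ j = 3 * (j / 3) + 1 ∨ j = 3 * (j / 3) + 2) with h | h | h
    · refine Or.inr ⟨_, hcentre, ?_⟩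
      rw [show 3 * (j / 3) + 1 = j + 1 by omega]
      exact (hu j (by omega)).symm
    · exact Or.inl (h ▸ hcentre)
    · refine Or.inr ⟨_, hcentre, ?_⟩
      convert hu (3 * (j / 3) + 1) (by omega) using 2
  · rw [show centre (j / 3) = j by simp only [hcentre_def]; omega] at hcentre
    exact Or.inl hcentre

theorem not_adj_deleteEdges_of_incidenceSet_subset {B : Set (Sym2 V)} {v : V}
    (h : G.incidenceSet v ⊆ B) (w : V) : ¬(G.deleteEdges B).Adj v w := fun hvw =>
  ((deleteEdges_adj ..).1 hvw).2 (h ⟨hvw.1, Sym2.mem_mk_left v w⟩)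

theorem card_incidenceFinset_union_of_adj [DecidableEq V] {u w : V} [Fintype (G.neighborSet u)]
    [Fintype (G.neighborSet w)] (h : G.Adj u w) :
    (G.incidenceFinset u ∪ G.incidenceFinset w).card = G.degree u + G.degree w - 1 := by
  have hinter : G.incidenceFinset u ∩ G.incidenceFinset w = {s(u, w)} := by
    rw [← Finset.coe_inj, Finset.coe_inter, coe_incidenceFinset, coe_incidenceFinset,
      G.incidenceSet_inter_incidenceSet_of_adj h, Finset.coe_singleton]
  have := Finset.card_union_add_card_inter (G.incidenceFinset u) (G.incidenceFinset w)
  rw [hinter, Finset.card_singleton, card_incidenceFinset_eq_degree,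
    card_incidenceFinset_eq_degree] at this
  omega

theorem bondageNum_eq_card [Fintype V] {B : Finset (Sym2 V)} (hBE : ↑B ⊆ G.edgeSet)
    (hB : G.domNum < (G.deleteEdges ↑B).domNum)
    (hmin : ∀ B' : Finset (Sym2 V), ↑B' ⊆ G.edgeSet → B'.card < B.card →
      (G.deleteEdges ↑B').domNum ≤ G.domNum) :
    G.bondageNum = B.card := by
  refine le_antisymm (Nat.sInf_le ⟨B, rfl, hBE, hB⟩) (le_csInf ⟨_, B, rfl, hBE, hB⟩ ?_)
  rintro _ ⟨B', rfl, hB'E, hB'⟩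
  by_contra! hlt
  exact (hmin B' hB'E hlt).not_gt hB'

end General

section Cycle

open scoped Fin.NatCast Fin.CommRing

variable {n : ℕ}

theorem cycleGraph_degree_eq_two (hn : 3 ≤ n) (v : Fin n) : (cycleGraph n).degree v = 2 := by
  obtain ⟨m, rfl⟩ : ∃ m, n = m + 3 := ⟨n - 3, by omega⟩
  exact cycleGraph_degree_three_le

variable [NeZero n]

theorem cycleGraph_adj_iff (hn : 2 ≤ n) {u v : Fin n} :
    (cycleGraph n).Adj u v ↔ u = v + 1 ∨ v = u + 1 := by
  have hone : (1 : Fin n).val = 1 := by simp [Nat.mod_eq_of_lt hn]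
  rw [cycleGraph_adj', ← hone, ← Fin.ext_iff, ← Fin.ext_iff, sub_eq_iff_eq_add,
    sub_eq_iff_eq_add, add_comm v, add_comm u]

theorem cycleGraph_adj_add_one (hn : 2 ≤ n) (v : Fin n) : (cycleGraph n).Adj v (v + 1) :=
  (cycleGraph_adj_iff hn).2 (Or.inr rfl)

theorem exists_eq_add_one_of_mem_edgeSet_cycleGraph (hn : 2 ≤ n) {e : Sym2 (Fin n)}
    (he : e ∈ (cycleGraph n).edgeSet) : ∃ v, e = s(v, v + 1) := by
  induction e with
  | h u w =>
    rcases (cycleGraph_adj_iff hn).1 ((mem_edgeSet _).1 he) with rfl | rfl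
    exacts [⟨w, Sym2.eq_swap⟩, ⟨u, rfl⟩]

theorem eq_of_sym2_add_one_eq (hn : 3 ≤ n) {x y : Fin n} (h : s(x, x + 1) = s(y, y + 1)) :
    x = y := by
  rcases Sym2.eq_iff.1 h with ⟨hxy, -⟩ | ⟨hxy, hyx⟩
  · exact hxy
  · have htwo : ((2 : ℕ) : Fin n) = 0 := by
      push_cast
      linear_combination hyx - hxy
    have := Nat.le_of_dvd two_pos (Fin.natCast_eq_zero.1 htwo)
    omega

theorem exists_finset_dominating_arc (hn : 2 ≤ n) {B : Set (Sym2 (Fin n))} (v : Fin n)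
    (c m : ℕ) (hB : ∀ k, k + 1 < m → s(v + (c + k : ℕ), v + (c + k : ℕ) + 1) ∉ B) :
    ∃ S : Finset (Fin n), S.card ≤ (m + 2) / 3 ∧ ∀ k < m,
      v + (c + k : ℕ) ∈ S ∨ ∃ w ∈ S, ((cycleGraph n).deleteEdges B).Adj w (v + (c + k : ℕ)) := by
  refine exists_finset_dominating_path (fun k => v + (c + k : ℕ)) fun k hk => ?_
  rw [deleteEdges_adj, ← add_assoc, Nat.cast_succ, ← add_assoc]
  exact ⟨cycleGraph_adj_add_one hn _, hB k hk⟩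

theorem domNum_deleteEdges_le_of_subset_pair (hn : 3 ≤ n) {B : Set (Sym2 (Fin n))} (v : Fin n)
    {a : ℕ} (ha : a < n) (hB : B ⊆ {s(v, v + 1), s(v + a, v + a + 1)}) :
    ((cycleGraph n).deleteEdges B).domNum ≤ (a + 2) / 3 + (n - a + 2) / 3 := by
  have hcut : ∀ i < n, s(v + i, v + i + 1) ∈ B → i = 0 ∨ i = a := by
    intro i hi hmem
    rcases hB hmem with h | h
    · refine Or.inl ((Fin.add_natCast_inj v hi (Nat.pos_of_neZero n)).1 ?_)
      simpa using eq_of_sym2_add_one_eq hn h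
    · exact Or.inr ((Fin.add_natCast_inj v hi ha).1 (eq_of_sym2_add_one_eq hn h))
  obtain ⟨S₁, hcard₁, hdom₁⟩ := exists_finset_dominating_arc (by omega) v 1 a
    fun k hk hmem => by have := hcut _ (by omega) hmem; omega
  obtain ⟨S₂, hcard₂, hdom₂⟩ := exists_finset_dominating_arc (by omega) v (a + 1) (n - a)
    fun k hk hmem => by have := hcut _ (by omega) hmem; omega
  refine (domNum_le_card _ (S := S₁ ∪ S₂) fun y => ?_).trans
    ((Finset.card_union_le _ _).trans (by omega))
  set k := (y - (v + 1)).val with hk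
  have hy : y = v + (1 + k : ℕ) := by
    rw [hk, Nat.cast_add, Fin.cast_val_eq_self, Nat.cast_one]
    abel
  rcases lt_or_ge k a with hka | hka
  · rw [hy]
    exact (hdom₁ k hka).imp (Finset.mem_union_left _)
      fun ⟨w, hw, hadj⟩ => ⟨w, Finset.mem_union_left _ hw, hadj⟩
  · rw [hy, show 1 + k = a + 1 + (k - a) by omega]
    exact (hdom₂ (k - a) (by omega)).imp (Finset.mem_union_right _)
      fun ⟨w, hw, hadj⟩ => ⟨w, Finset.mem_union_right _ hw, hadj⟩

theorem exists_subset_singleton_of_card_le_one_cycleGraph (hn : 2 ≤ n) {B : Finset (Sym2 (Fin n))}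
    (hBE : ↑B ⊆ (cycleGraph n).edgeSet) (hcard : B.card ≤ 1) :
    ∃ v : Fin n, ↑B ⊆ ({s(v, v + 1)} : Set (Sym2 (Fin n))) := by
  rcases B.eq_empty_or_nonempty with rfl | ⟨e, he⟩
  · exact ⟨0, by simp⟩
  · obtain ⟨v, rfl⟩ := exists_eq_add_one_of_mem_edgeSet_cycleGraph hn (hBE he)
    exact ⟨v, fun x hx => Finset.card_le_one.1 hcard x hx _ he⟩

theorem exists_subset_pair_of_card_le_two_cycleGraph (hn : 2 ≤ n) {B : Finset (Sym2 (Fin n))}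
    (hBE : ↑B ⊆ (cycleGraph n).edgeSet) (hcard : B.card ≤ 2) :
    ∃ v w : Fin n, ↑B ⊆ ({s(v, v + 1), s(w, w + 1)} : Set (Sym2 (Fin n))) := by
  rcases Nat.lt_or_ge B.card 2 with hlt | hge
  · obtain ⟨v, hv⟩ := exists_subset_singleton_of_card_le_one_cycleGraph hn hBE (by omega)
    exact ⟨v, v, by simpa using hv⟩
  · obtain ⟨x, y, -, rfl⟩ := Finset.card_eq_two.1 (le_antisymm hcard hge)
    rw [Finset.coe_pair, Set.insert_subset_iff, Set.singleton_subset_iff] at hBE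
    obtain ⟨v, rfl⟩ := exists_eq_add_one_of_mem_edgeSet_cycleGraph hn hBE.1
    obtain ⟨w, rfl⟩ := exists_eq_add_one_of_mem_edgeSet_cycleGraph hn hBE.2
    exact ⟨v, w, by rw [Finset.coe_pair]⟩

theorem domNum_deleteEdges_cycleGraph_le_of_card_le_one (hn : 3 ≤ n)
    {B : Finset (Sym2 (Fin n))} (hBE : ↑B ⊆ (cycleGraph n).edgeSet) (hcard : B.card ≤ 1) :
    ((cycleGraph n).deleteEdges ↑B).domNum ≤ (n + 2) / 3 := by
  obtain ⟨v, hv⟩ := exists_subset_singleton_of_card_le_one_cycleGraph (by omega) hBE hcard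
  refine (domNum_deleteEdges_le_of_subset_pair hn v (Nat.pos_of_neZero n) ?_).trans (by omega)
  simpa using hv

theorem domNum_deleteEdges_cycleGraph_le_of_card_le_two (hn : 3 ≤ n) (hmod : n % 3 = 1)
    {B : Finset (Sym2 (Fin n))} (hBE : ↑B ⊆ (cycleGraph n).edgeSet) (hcard : B.card ≤ 2) :
    ((cycleGraph n).deleteEdges ↑B).domNum ≤ (n + 2) / 3 := by
  obtain ⟨v, w, hvw⟩ := exists_subset_pair_of_card_le_two_cycleGraph (by omega) hBE hcard
  have hw : w = v + (w - v).val := by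
    rw [Fin.cast_val_eq_self]
    abel
  rw [hw] at hvw
  exact (domNum_deleteEdges_le_of_subset_pair hn v (w - v).isLt hvw).trans (by omega)

theorem cycleGraph_domNum (hn : 3 ≤ n) : (cycleGraph n).domNum = (n + 2) / 3 := by
  have hle := domNum_deleteEdges_cycleGraph_le_of_card_le_one hn (B := ∅) (by simp) (by simp)
  rw [Finset.coe_empty, deleteEdges_empty] at hle
  have hge := card_add_two_mul_card_le_three_mul_domNum (G := cycleGraph n)
    (fun v => (cycleGraph_degree_eq_two hn v).le) (T := ∅) (by simp)
  rw [Fintype.card_fin] at hge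
  omega

theorem cycleGraph_domNum_lt_deleteEdges (hn : 3 ≤ n) {B : Set (Sym2 (Fin n))}
    {T : Finset (Fin n)} (hT : ∀ t ∈ T, (cycleGraph n).incidenceSet t ⊆ B)
    (hTcard : 3 * ((n + 2) / 3) < n + 2 * T.card) :
    (cycleGraph n).domNum < ((cycleGraph n).deleteEdges B).domNum := by
  classical
  have hcount := card_add_two_mul_card_le_three_mul_domNum (G := (cycleGraph n).deleteEdges B)
    (fun v => (degree_le_of_le (deleteEdges_le B)).trans (cycleGraph_degree_eq_two hn v).le)
    fun t ht => not_adj_deleteEdges_of_incidenceSet_subset (hT t ht)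
  rw [Fintype.card_fin] at hcount
  rw [cycleGraph_domNum hn]
  omega

theorem bondageNum_cycleGraph_eq_card_biUnion_incidenceFinset (hn : 3 ≤ n)
    {T : Finset (Fin n)} (hTcard : 3 * ((n + 2) / 3) < n + 2 * T.card)
    (hmin : ∀ B : Finset (Sym2 (Fin n)), ↑B ⊆ (cycleGraph n).edgeSet →
      B.card < (T.biUnion fun v => (cycleGraph n).incidenceFinset v).card →
      ((cycleGraph n).deleteEdges ↑B).domNum ≤ (n + 2) / 3) :
    (cycleGraph n).bondageNum = (T.biUnion fun v => (cycleGraph n).incidenceFinset v).card := by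
  refine bondageNum_eq_card ?_ (cycleGraph_domNum_lt_deleteEdges hn (fun t ht => ?_) hTcard)
    fun B hBE hB => cycleGraph_domNum hn ▸ hmin B hBE hB
  · rw [Finset.coe_biUnion]
    refine Set.iUnion₂_subset fun v _ => ?_
    rw [coe_incidenceFinset]
    exact incidenceSet_subset _ v
  · rw [← coe_incidenceFinset]
    exact_mod_cast Finset.subset_biUnion_of_mem (fun v => (cycleGraph n).incidenceFinset v) ht

end Cycle

end SimpleGraph

theorem bondage_cycle (n : ℕ) (hn : 3 ≤ n) :
    (SimpleGraph.cycleGraph n).bondageNum = if n % 3 = 1 then 3 else 2 := by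
  have : NeZero n := ⟨by omega⟩
  have hdeg := cycleGraph_degree_eq_two hn
  split_ifs with hmod
  · have hadj : (cycleGraph n).Adj 0 1 := by
      simpa using cycleGraph_adj_add_one (n := n) (by omega) 0
    have hcard :
        (({0, 1} : Finset (Fin n)).biUnion fun v => (cycleGraph n).incidenceFinset v).card = 3 := by
      rw [Finset.biUnion_insert, Finset.singleton_biUnion,
        card_incidenceFinset_union_of_adj hadj, hdeg, hdeg]
    rw [← hcard]
    refine bondageNum_cycleGraph_eq_card_biUnion_incidenceFinset hn ?_ fun B hBE hB =>
      domNum_deleteEdges_cycleGraph_le_of_card_le_two hn hmod hBE (by omega)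
    rw [Finset.card_pair hadj.ne]
    omega
  · have hcard :
        (({0} : Finset (Fin n)).biUnion fun v => (cycleGraph n).incidenceFinset v).card = 2 := by
      rw [Finset.singleton_biUnion, card_incidenceFinset_eq_degree, hdeg]
    rw [← hcard]
    refine bondageNum_cycleGraph_eq_card_biUnion_incidenceFinset hn ?_ fun B hBE hB =>
      domNum_deleteEdges_cycleGraph_le_of_card_le_one hn hBE (by omega)
    rw [Finset.card_singleton]
    omega
end

section
/- For any two distinct vertices x and y in a graph G with distance d(x,y) ≤ 2, b(G) ≤ deg(x) + deg(y) − 1. -/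
open SimpleGraph

variable {V : Type*}

lemma domNum_spec [Fintype V] (G : SimpleGraph V) :
    ∃ S : Finset V, S.card = G.domNum ∧ G.IsDomSet S := by
  have h : {n | ∃ S : Finset V, S.card = n ∧ G.IsDomSet S}.Nonempty :=
    ⟨Finset.univ.card, Finset.univ, rfl, fun v => Or.inl (Finset.mem_univ v)⟩
  exact Nat.sInf_mem h

lemma domNum_le [Fintype V] (G : SimpleGraph V) {S : Finset V} (h : G.IsDomSet S) :
    G.domNum ≤ S.card := Nat.sInf_le ⟨S, rfl, h⟩

lemma exists_mid (G : SimpleGraph V) {x y : V} (hne : x ≠ y) (p : G.Walk x y)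
    (hl : p.length ≤ 2) : ∃ w, (w = x ∨ G.Adj x w) ∧ G.Adj w y := by
  match p with
  | .nil => exact absurd rfl hne
  | .cons (v := b) h .nil => exact ⟨x, Or.inl rfl, h⟩
  | .cons (v := b) h (.cons h' .nil) => exact ⟨b, Or.inr h, h'⟩
  | .cons h (.cons h' (.cons h'' q)) => simp [SimpleGraph.Walk.length_cons] at hl

theorem bondage_le_degree_add_degree_sub_one_of_dist_le_two [Fintype V]
    (G : SimpleGraph V) [DecidableRel G.Adj] (hE : G.edgeSet.Nonempty)
    {x y : V} (hne : x ≠ y) (hreach : G.Reachable x y) (hdist : G.dist x y ≤ 2) :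
    G.bondageNum ≤ G.degree x + G.degree y - 1 := by
  classical
  obtain ⟨p, hp⟩ := hreach.exists_walk_length_eq_dist
  obtain ⟨w, hw1, hw2⟩ := exists_mid G hne p (hp ▸ hdist)
  set B : Finset (Sym2 V) :=
    G.incidenceFinset x ∪ (G.incidenceFinset y \ {s(w, y)}) with hB
  have hwy_mem : s(w, y) ∈ G.incidenceFinset y := by
    rw [mem_incidenceFinset]
    exact G.mk'_mem_incidenceSet_right_iff.2 hw2
  -- card bound
  have hdegy : 1 ≤ G.degree y := by
    rw [← card_incidenceFinset_eq_degree]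
    exact Finset.card_pos.2 ⟨_, hwy_mem⟩
  have hcard : B.card ≤ G.degree x + G.degree y - 1 := by
    calc B.card ≤ (G.incidenceFinset x).card + (G.incidenceFinset y \ {s(w, y)}).card :=
          Finset.card_union_le _ _
      _ = G.degree x + ((G.incidenceFinset y).card - 1) := by
          rw [card_incidenceFinset_eq_degree,
            Finset.card_sdiff_of_subset (Finset.singleton_subset_iff.2 hwy_mem), Finset.card_singleton]
      _ = G.degree x + G.degree y - 1 := by
          rw [card_incidenceFinset_eq_degree]; omega
  -- B consists of edges
  have hBsub : ↑B ⊆ G.edgeSet := by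
    intro e he
    simp only [hB, Finset.coe_union, Set.mem_union, Finset.coe_sdiff, Set.mem_diff,
      Finset.mem_coe, mem_incidenceFinset] at he
    rcases he with h | ⟨h, _⟩
    · exact h.1
    · exact h.1
  set H := G.deleteEdges ↑B with hH
  -- x is isolated in H
  have hxiso : ∀ v, ¬ H.Adj x v := by
    intro v hv
    rw [hH, deleteEdges_adj] at hv
    exact hv.2 (Finset.mem_coe.2 (Finset.mem_union_left _
      (by rw [mem_incidenceFinset]; exact G.mk'_mem_incidenceSet_left_iff.2 hv.1)))
  -- y's only possible neighbor in H is w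
  have hyw : ∀ v, H.Adj y v → v = w := by
    intro v hv
    rw [hH, deleteEdges_adj] at hv
    obtain ⟨hadj, hnot⟩ := hv
    have hmem : s(y, v) ∈ G.incidenceFinset y := by
      rw [mem_incidenceFinset]; exact G.mk'_mem_incidenceSet_left_iff.2 hadj
    have : s(y, v) = s(w, y) := by
      by_contra hc
      exact hnot (Finset.mem_coe.2 (Finset.mem_union_right _
        (Finset.mem_sdiff.2 ⟨hmem, by simpa using hc⟩)))
    rw [Sym2.eq_iff] at this
    rcases this with ⟨hyw', hvy⟩ | ⟨_, hvw⟩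
    · exact absurd hyw'.symm hw2.ne
    · exact hvw
  -- main inequality
  have hwny : w ≠ y := hw2.ne
  have hlt : G.domNum < H.domNum := by
    obtain ⟨D, hDcard, hDdom⟩ := domNum_spec H
    have hxD : x ∈ D := by
      rcases hDdom x with h | ⟨u, _, hu⟩
      · exact h
      · exact absurd hu.symm (hxiso u)
    set D' : Finset V := insert w ((D.erase x).erase y) with hD'
    have hD'dom : G.IsDomSet D' := by
      intro v
      rcases hDdom v with hvD | ⟨u, huD, hu⟩
      · by_cases hvx : v = x
        · subst hvx
          rcases hw1 with h | h
          · exact Or.inl (by rw [hD', h]; exact Finset.mem_insert_self _ _)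
          · exact Or.inr ⟨w, Finset.mem_insert_self _ _, h.symm⟩
        · by_cases hvy : v = y
          · subst hvy
            exact Or.inr ⟨w, Finset.mem_insert_self _ _, hw2⟩
          · exact Or.inl (Finset.mem_insert_of_mem
              (Finset.mem_erase.2 ⟨hvy, Finset.mem_erase.2 ⟨hvx, hvD⟩⟩))
      · by_cases hux : u = x
        · exact absurd (hux ▸ hu) (hxiso v)
        · by_cases huy : u = y
          · subst huy
            have := hyw v hu
            exact Or.inl (this ▸ Finset.mem_insert_self _ _)
          · exact Or.inr ⟨u, Finset.mem_insert_of_mem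
              (Finset.mem_erase.2 ⟨huy, Finset.mem_erase.2 ⟨hux, huD⟩⟩),
              (deleteEdges_adj.mp hu).1⟩
    have hD'card : D'.card < D.card := by
      by_cases hyD : y ∈ D
      · have h1 : ((D.erase x).erase y).card = D.card - 2 := by
          rw [Finset.card_erase_of_mem (Finset.mem_erase.2 ⟨hne.symm, hyD⟩),
            Finset.card_erase_of_mem hxD]
          omega
        have h2 : D'.card ≤ ((D.erase x).erase y).card + 1 := Finset.card_insert_le _ _
        have h3 : 2 ≤ D.card := by
          have : ({x, y} : Finset V) ⊆ D := by
            intro a ha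
            rcases Finset.mem_insert.mp ha with h | h
            · exact h ▸ hxD
            · exact (Finset.mem_singleton.mp h) ▸ hyD
          calc 2 = ({x, y} : Finset V).card := (Finset.card_pair hne).symm
            _ ≤ D.card := Finset.card_le_card this
        omega
      · -- y ∉ D, so w ∈ D via domination, and w ≠ x
        have hwD : w ∈ D := by
          rcases hDdom y with h | ⟨u, huD, hu⟩
          · exact absurd h hyD
          · exact (hyw u hu.symm) ▸ huD
        have hwx : w ≠ x := by
          intro h
          subst h
          rcases hDdom y with hy | ⟨u, huD, hu⟩
          · exact hyD hy
          · have := hyw u hu.symm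
            subst this
            exact hxiso y hu
        have hmem : w ∈ (D.erase x).erase y :=
          Finset.mem_erase.2 ⟨hwny, Finset.mem_erase.2 ⟨hwx, hwD⟩⟩
        rw [hD', Finset.insert_eq_self.2 hmem]
        calc ((D.erase x).erase y).card ≤ (D.erase x).card := Finset.card_erase_le
          _ < D.card := Finset.card_erase_lt_of_mem hxD
    calc G.domNum ≤ D'.card := domNum_le G hD'dom
      _ < D.card := hD'card
      _ = H.domNum := hDcard
  calc G.bondageNum ≤ B.card := Nat.sInf_le ⟨B, rfl, hBsub, hlt⟩
    _ ≤ G.degree x + G.degree y - 1 := hcard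
end
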